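/- arXiv:2408.02435 — 2 statements merged into one kernel-verified Lean document; each statement's English description precedes it below -/
import Mathlib

section
/- Let K1 = (G, M, I) and K2 = (M, B, J) be formal contexts and K = (G, M, B, Y) their corresponding triadic context, where (g,m,b) ∈ Y ⟺ (g,m) ∈ I ∧ (m,b) ∈ J. Assume there exists b ∈ B with (m,b) ∈ J for all m ∈ M, and assume (∅, M) is a formal concept of K1. Then the set of extents of K1 equals the set of extents (first components of triadic concepts) of K; consequently the concept lattice of K1 is order-isomorphic to the ordered set of extents of K. -/
variable {G M Bc : Type*}

/-- Attribute derivation in a dyadic context (attribute set = whole type). -/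
def up (I : Set (G × M)) (A : Set G) : Set M :=
  {m | ∀ g ∈ A, (g, m) ∈ I}

/-- Object derivation in a dyadic context. -/
def down (I : Set (G × M)) (Bs : Set M) : Set G :=
  {g | ∀ m ∈ Bs, (g, m) ∈ I}

/-- A formal concept of a dyadic context. -/
def IsConcept (I : Set (G × M)) (A : Set G) (Bs : Set M) : Prop :=
  up I A = Bs ∧ down I Bs = A

/-- `X1 × X2 × X3 ⊆ Y`. -/
def TriIncl (Y : Set (G × M × Bc)) (X1 : Set G) (X2 : Set M) (X3 : Set Bc) : Prop :=
  ∀ g ∈ X1, ∀ m ∈ X2, ∀ b ∈ X3, (g, m, b) ∈ Y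

/-- A triadic concept: a componentwise maximal triple with `X1 × X2 × X3 ⊆ Y`. -/
def IsTriConcept (Y : Set (G × M × Bc)) (X1 : Set G) (X2 : Set M) (X3 : Set Bc) : Prop :=
  TriIncl Y X1 X2 X3 ∧
  (∀ Z1, X1 ⊆ Z1 → TriIncl Y Z1 X2 X3 → Z1 = X1) ∧
  (∀ Z2, X2 ⊆ Z2 → TriIncl Y X1 Z2 X3 → Z2 = X2) ∧
  (∀ Z3, X3 ⊆ Z3 → TriIncl Y X1 X2 Z3 → Z3 = X3)

/-- The extents of a dyadic context. -/
def extents (I : Set (G × M)) : Set (Set G) :=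
  {A | ∃ Bs, IsConcept I A Bs}

/-- The intents of a dyadic context. -/
def intents (I : Set (G × M)) : Set (Set M) :=
  {Bs | ∃ A, IsConcept I A Bs}

/-- The extents (first components of triadic concepts) of a triadic context. -/
def triExtents (Y : Set (G × M × Bc)) : Set (Set G) :=
  {X1 | ∃ X2 X3, IsTriConcept Y X1 X2 X3}

/-- The modi (third components of triadic concepts) of a triadic context. -/
def triModi (Y : Set (G × M × Bc)) : Set (Set Bc) :=
  {X3 | ∃ X1 X2, IsTriConcept Y X1 X2 X3}

theorem stmt7 (I : Set (G × M)) (J : Set (M × Bc)) (Y : Set (G × M × Bc))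
    (hY : ∀ g m b, (g, m, b) ∈ Y ↔ (g, m) ∈ I ∧ (m, b) ∈ J)
    (hb : ∃ b : Bc, ∀ m : M, (m, b) ∈ J)
    (hconc : IsConcept I ∅ Set.univ) :
    extents I = triExtents Y ∧
    ∃ φ : Set G → Set G, Set.BijOn φ (extents I) (triExtents Y) ∧
      ∀ A ∈ extents I, ∀ A' ∈ extents I, (A ⊆ A' ↔ φ A ⊆ φ A') := by
  obtain ⟨b0, hb0⟩ := hb
  have hmain : extents I = triExtents Y := by
    ext A
    constructor
    · rintro ⟨Bs, hup, hdown⟩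
      by_cases hA : A = ∅
      · subst hA
        have hBs : Bs = Set.univ := by
          rw [← hup]; ext m; simp [up]
        refine ⟨Set.univ, Set.univ, ?_, ?_, ?_, ?_⟩
        · intro g hg; exact absurd hg (Set.notMem_empty g)
        · intro Z1 _ hT
          ext g
          simp only [Set.mem_empty_iff_false, iff_false]
          intro hg
          have : g ∈ down I Set.univ := by
            intro m _
            exact ((hY g m b0).mp (hT g hg m trivial b0 trivial)).1
          rw [hconc.2] at this
          exact this
        · intro Z2 h _; exact Set.eq_univ_of_univ_subset h
        · intro Z3 h _; exact Set.eq_univ_of_univ_subset h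
      · set X3 : Set Bc := {b | ∀ m ∈ Bs, (m, b) ∈ J} with hX3
        obtain ⟨g0, hg0⟩ := Set.nonempty_iff_ne_empty.mpr hA
        have hb0X3 : b0 ∈ X3 := fun m _ => hb0 m
        refine ⟨Bs, X3, ?_, ?_, ?_, ?_⟩
        · intro g hg m hm b hbX
          exact (hY g m b).mpr ⟨(hup ▸ hm : m ∈ up I A) g hg, hbX m hm⟩
        · intro Z1 hsub hT
          refine Set.Subset.antisymm ?_ hsub
          intro g hg
          rw [← hdown]
          intro m hm
          exact ((hY g m b0).mp (hT g hg m hm b0 hb0X3)).1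
        · intro Z2 hsub hT
          refine Set.Subset.antisymm ?_ hsub
          intro m hm
          rw [← hup]
          intro g hg
          exact ((hY g m b0).mp (hT g hg m hm b0 hb0X3)).1
        · intro Z3 hsub hT
          refine Set.Subset.antisymm ?_ hsub
          intro b hbZ m hm
          exact ((hY g0 m b).mp (hT g0 hg0 m hm b hbZ)).2
    · rintro ⟨X2, X3, hT, hmax1, hmax2, hmax3⟩
      by_cases hA : A = ∅
      · subst hA; exact ⟨Set.univ, hconc⟩
      by_cases hX3 : X3 = ∅
      · -- then A = univ
        have hAuniv : A = Set.univ := by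
          have := hmax1 Set.univ (Set.subset_univ A)
            (by intro g _ m _ b hbX; rw [hX3] at hbX; exact absurd hbX (Set.notMem_empty b))
          exact this.symm
        refine ⟨up I Set.univ, by rw [hAuniv], ?_⟩
        rw [hAuniv]
        exact Set.eq_univ_of_univ_subset (fun g _ m hm => hm g trivial)
      · obtain ⟨bh, hbh⟩ := Set.nonempty_iff_ne_empty.mpr hX3
        obtain ⟨g0, hg0⟩ := Set.nonempty_iff_ne_empty.mpr hA
        refine ⟨up I A, rfl, ?_⟩
        refine Set.Subset.antisymm ?_ (fun g hg m hm => hm g hg)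
        intro g hg
        have hZ : TriIncl Y (A ∪ {g}) X2 X3 := by
          rintro g' (hg' | hg') m hm b hbX
          · exact hT g' hg' m hm b hbX
          · rw [Set.mem_singleton_iff] at hg'
            subst hg'
            refine (hY g' m b).mpr ⟨hg m (fun g1 hg1 => ((hY g1 m bh).mp (hT g1 hg1 m hm bh hbh)).1), ((hY g0 m b).mp (hT g0 hg0 m hm b hbX)).2⟩
        have := hmax1 (A ∪ {g}) Set.subset_union_left hZ
        rw [← this]; exact Or.inr rfl
  refine ⟨hmain, id, ?_, fun A _ A' _ => Iff.rfl⟩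
  rw [← hmain]
  exact ⟨fun _ h => h, fun _ _ _ _ h => h, fun A hA => ⟨A, hA, rfl⟩⟩
end

section
/- Let K1 = (G, M, I) and K2 = (M, B, J) be formal contexts and K = (G, M, B, Y) their corresponding triadic context, where (g,m,b) ∈ Y ⟺ (g,m) ∈ I ∧ (m,b) ∈ J. Assume there exists g ∈ G with (g,m) ∈ I for all m ∈ M, and assume (M, ∅) is a formal concept of K2. Then the set of intents of K2 equals the set of modi (third components of triadic concepts) of K, and the concept lattice of K2 is isomorphic to the ordered set of modi of K. -/
variable {G M Bc : Type*}

lemma up_mem_intents (J : Set (M × Bc)) (A : Set M) : up J A ∈ intents J := by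
  refine ⟨down (G := M) J (up J A), ?_, rfl⟩
  ext b
  constructor
  · intro hb m hm
    exact hb m (fun b' hb' => hb' m hm)
  · intro hb m hm
    exact hm b hb

lemma up_empty (J : Set (M × Bc)) : up J (∅ : Set M) = Set.univ := by
  ext b; simp [up]

theorem stmt8 (I : Set (G × M)) (J : Set (M × Bc)) (Y : Set (G × M × Bc))
    (hY : ∀ g m b, (g, m, b) ∈ Y ↔ (g, m) ∈ I ∧ (m, b) ∈ J)
    (hg : ∃ g : G, ∀ m : M, (g, m) ∈ I)
    (hconc : IsConcept J Set.univ ∅) :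
    intents J = triModi Y ∧
    ∃ φ : Set Bc → Set Bc, Set.BijOn φ (intents J) (triModi Y) ∧
      ∀ A ∈ intents J, ∀ A' ∈ intents J, (A ⊆ A' ↔ φ A ⊆ φ A') := by
  obtain ⟨g0, hg0⟩ := hg
  obtain ⟨hcu, hcd⟩ := hconc
  have key : intents J = triModi Y := by
    ext C
    constructor
    · rintro ⟨A, hupA, hdownC⟩
      have hupX2 : up J (down J C) = C := by rw [hdownC, hupA]
      set X2 : Set M := down J C with hX2def
      set X1 : Set G := {g | ∀ m ∈ X2, ∀ b ∈ C, (g, m, b) ∈ Y} with hX1def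
      have hg0X1 : g0 ∈ X1 := by
        intro m hm b hb
        exact (hY g0 m b).mpr ⟨hg0 m, hm b hb⟩
      refine ⟨X1, X2, ?_, ?_, ?_, ?_⟩
      · intro g hg1 m hm b hb; exact hg1 m hm b hb
      · intro Z1 hsub htri
        refine Set.Subset.antisymm (fun g hgZ m hm b hb => htri g hgZ m hm b hb) hsub
      · intro Z2 hsub htri
        refine Set.Subset.antisymm (fun m hmZ b hb => ?_) hsub
        exact ((hY g0 m b).mp (htri g0 hg0X1 m hmZ b hb)).2
      · intro Z3 hsub htri
        refine Set.Subset.antisymm (fun b hbZ => ?_) hsub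
        rw [← hupX2]
        intro m hm
        exact ((hY g0 m b).mp (htri g0 hg0X1 m hm b hbZ)).2
    · rintro ⟨X1, X2, hTI, h1, h2, h3⟩
      rcases Set.eq_empty_or_nonempty X2 with hX2 | hX2
      · have : C = Set.univ := by
          refine (h3 Set.univ (Set.subset_univ _) ?_).symm
          intro g hg1 m hm
          rw [hX2] at hm
          exact absurd hm (Set.notMem_empty m)
        rw [this, ← up_empty J]
        exact up_mem_intents J ∅
      rcases Set.eq_empty_or_nonempty C with hX3 | hX3
      · rw [hX3]
        exact ⟨Set.univ, hcu, hcd⟩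
      rcases Set.eq_empty_or_nonempty X1 with hX1 | hX1
      · have : C = Set.univ := by
          refine (h3 Set.univ (Set.subset_univ _) ?_).symm
          intro g hg1
          rw [hX1] at hg1
          exact absurd hg1 (Set.notMem_empty g)
        rw [this, ← up_empty J]
        exact up_mem_intents J ∅
      obtain ⟨g1, hg1⟩ := hX1
      have hg0X1 : g0 ∈ X1 := by
        have := h1 (insert g0 X1) (Set.subset_insert _ _) ?_
        · rw [← this]; exact Set.mem_insert _ _
        · intro g hgmem m hm b hb
          rcases hgmem with rfl | hgX
          · exact (hY g m b).mpr ⟨hg0 m, ((hY g1 m b).mp (hTI g1 hg1 m hm b hb)).2⟩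
          · exact hTI g hgX m hm b hb
      have : C = up J X2 := by
        apply Set.Subset.antisymm
        · intro b hb m hm
          exact ((hY g0 m b).mp (hTI g0 hg0X1 m hm b hb)).2
        · intro b hb
          have := h3 (insert b C) (Set.subset_insert _ _) ?_
          · rw [← this]; exact Set.mem_insert _ _
          · intro g hgX m hm b' hb'
            rcases hb' with rfl | hbC
            · obtain ⟨b0, hb0⟩ := hX3
              exact (hY g m b').mpr ⟨((hY g m b0).mp (hTI g hgX m hm b0 hb0)).1, hb m hm⟩
            · exact hTI g hgX m hm b' hbC
      rw [this]
      exact up_mem_intents J X2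
  refine ⟨key, id, ?_, fun A _ A' _ => Iff.rfl⟩
  rw [← key]
  exact Set.bijOn_id _
end
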